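/- arXiv:1601.01308 — 2 statements merged into one kernel-verified Lean document; each statement's English description precedes it below -/
import Mathlib

section
/- Let n ≥ 3 be an integer and let k be a field of characteristic different from 2 containing a primitive n-th root of unity. Let I = ⟨x(yⁿ−zⁿ), y(zⁿ−xⁿ), z(xⁿ−yⁿ)⟩ ⊆ k[x,y,z] and let Fₙ = (xⁿ−yⁿ)(yⁿ−zⁿ)(zⁿ−xⁿ). Then Fₙ ∉ I². -/
/-!
Map `k[x,y,z]` to `S = k[x,t]/(x^{n+1}, t^{2n+1})` in two ways, `ρ₁ : (x,y,z) ↦ (x,t,0)` and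
`ρ₂ : (x,y,z) ↦ (x,0,t)`. The two maps agree modulo `t`, and on each product `g` of two generators
of `I` they agree with a common value killed by `t` (it is `x²t^{2n}` for `(x(yⁿ−zⁿ))²` and `0`
otherwise). Hence `ρ₁(hg) − ρ₂(hg) = (ρ₁h − ρ₂h)·ρ₁g = 0` for all `h`, so `ρ₁ = ρ₂` on `I²`.
But `ρ₁Fₙ − ρ₂Fₙ = 2xⁿt^{2n} ≠ 0`: this compares the coefficients of `xⁿy^{2n}` and `xⁿz^{2n}`.
-/

open MvPolynomial

namespace RingHom

variable {R S : Type*} [CommRing R] [CommRing S]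

def eqLocusIdeal (ρ₁ ρ₂ : R →+* S) : Ideal R where
  carrier := {f | ∀ r, ρ₁ (r * f) = ρ₂ (r * f)}
  add_mem' hf hg r := by simp only [mul_add, map_add, hf r, hg r]
  zero_mem' r := by simp
  smul_mem' c f hf r := by simpa only [smul_eq_mul, ← mul_assoc] using hf (r * c)

theorem eq_of_mem_eqLocusIdeal {ρ₁ ρ₂ : R →+* S} {f : R} (hf : f ∈ eqLocusIdeal ρ₁ ρ₂) :
    ρ₁ f = ρ₂ f := by
  simpa using hf 1

theorem mem_eqLocusIdeal_of_dvd {ρ₁ ρ₂ : R →+* S} {u : S} (hu : ∀ r, u ∣ ρ₁ r - ρ₂ r) {f : R}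
    (hf : ρ₁ f = ρ₂ f) (huf : u * ρ₁ f = 0) : f ∈ eqLocusIdeal ρ₁ ρ₂ := by
  intro r
  obtain ⟨s, hs⟩ := hu r
  rw [← sub_eq_zero]
  calc ρ₁ (r * f) - ρ₂ (r * f) = (ρ₁ r - ρ₂ r) * ρ₁ f := by rw [map_mul, map_mul, hf]; ring
    _ = s * (u * ρ₁ f) := by rw [hs]; ring
    _ = 0 := by rw [huf, mul_zero]

end RingHom

theorem MvPolynomial.dvd_aeval_sub_aeval {σ k S : Type*} [CommRing k] [CommRing S] [Algebra k S]
    {u : S} {v w : σ → S} (h : ∀ i, u ∣ v i - w i) (p : MvPolynomial σ k) :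
    u ∣ aeval v p - aeval w p := by
  let π := Ideal.Quotient.mkₐ k (Ideal.span {u})
  have hπ : π.comp (aeval v) = π.comp (aeval w) := algHom_ext fun i => by
    simpa [π, Ideal.Quotient.mkₐ_eq_mk, Ideal.Quotient.eq, Ideal.mem_span_singleton] using h i
  exact Ideal.mem_span_singleton.mp (Ideal.Quotient.eq.mp (congrArg (· p) hπ))

theorem MvPolynomial.C_mul_X_pow_mul_X_pow_notMem_span {k : Type*} [CommRing k] {c : k}
    (hc : c ≠ 0) (a b : ℕ) :
    (C c * (X 0 ^ a * X 1 ^ b) : MvPolynomial (Fin 2) k)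
      ∉ Ideal.span {X 0 ^ (a + 1), X 1 ^ (b + 1)} := by
  rw [X_pow_eq_monomial, X_pow_eq_monomial, X_pow_eq_monomial, X_pow_eq_monomial, monomial_mul,
    C_mul_monomial, mul_one, mul_one, ← Set.image_pair (fun s => monomial s (1 : k)),
    mem_ideal_span_monomial_image]
  classical
  rw [support_monomial, if_neg hc]
  simp only [Finset.mem_singleton, forall_eq, Set.mem_insert_iff, Set.mem_singleton_iff,
    exists_eq_or_imp, exists_eq_left, not_or]
  constructor <;> intro h
  · simpa using h 0
  · simpa using h 1

section FermatSpecialization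

variable {k S : Type*} [CommRing k] [CommRing S] [Algebra k S] {n : ℕ} {x t : S}

theorem fermat_gen_mul_mem_eqLocusIdeal (hn : n ≠ 0) (hx : x ^ (n + 1) = 0)
    (ht : t ^ (2 * n + 1) = 0) {a b : MvPolynomial (Fin 3) k}
    (ha : a ∈ ({X 0 * (X 1 ^ n - X 2 ^ n), X 1 * (X 2 ^ n - X 0 ^ n),
      X 2 * (X 0 ^ n - X 1 ^ n)} : Set (MvPolynomial (Fin 3) k)))
    (hb : b ∈ ({X 0 * (X 1 ^ n - X 2 ^ n), X 1 * (X 2 ^ n - X 0 ^ n),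
      X 2 * (X 0 ^ n - X 1 ^ n)} : Set (MvPolynomial (Fin 3) k))) :
    a * b ∈ RingHom.eqLocusIdeal (aeval ![x, t, 0]).toRingHom (aeval ![x, 0, t]).toRingHom := by
  have hdvd : ∀ r : MvPolynomial (Fin 3) k, t ∣ aeval ![x, t, 0] r - aeval ![x, 0, t] r :=
    dvd_aeval_sub_aeval fun i => by fin_cases i <;> simp
  -- The generators go to `(x tⁿ, -xⁿ t, 0)` under the first map and `(-x tⁿ, 0, xⁿ t)` under
  -- the second, so these three products are all that can occur.
  have hpq : x * t ^ n * (t * x ^ n) = 0 := by linear_combination t ^ (n + 1) * hx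
  have hqq : t * x ^ n * (t * x ^ n) = 0 := by
    linear_combination t ^ 2 * pow_eq_zero_of_le (show n + 1 ≤ 2 * n by omega) hx
  have htpp : t * (x * t ^ n * (x * t ^ n)) = 0 := by linear_combination x ^ 2 * ht
  simp only [Set.mem_insert_iff, Set.mem_singleton_iff] at ha hb
  refine RingHom.mem_eqLocusIdeal_of_dvd hdvd ?_ ?_ <;>
  rcases ha with rfl | rfl | rfl <;> rcases hb with rfl | rfl | rfl <;>
  simp [hn, hpq, hqq, htpp, mul_comm (t * x ^ n) (x * t ^ n)]

theorem aeval_fermat_sub_aeval (hn : n ≠ 0) (hx : x ^ (2 * n) = 0) :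
    aeval ![x, t, 0] ((X 0 ^ n - X 1 ^ n) * (X 1 ^ n - X 2 ^ n) * (X 2 ^ n - X 0 ^ n)
        : MvPolynomial (Fin 3) k)
      - aeval ![x, 0, t] ((X 0 ^ n - X 1 ^ n) * (X 1 ^ n - X 2 ^ n) * (X 2 ^ n - X 0 ^ n)
        : MvPolynomial (Fin 3) k) = 2 * (x ^ n * t ^ (2 * n)) := by
  simp only [map_mul, map_sub, map_pow, aeval_X, Matrix.cons_val_zero, Matrix.cons_val_one,
    Matrix.cons_val, zero_pow hn, sub_zero, zero_sub]
  linear_combination (-2 * t ^ n) * hx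

end FermatSpecialization

theorem fermat_polynomial_not_mem_sq_general {k : Type*} [Field k] (hchar : ringChar k ≠ 2)
    (n : ℕ) (hn : 3 ≤ n) :
    ((X 0 ^ n - X 1 ^ n) * (X 1 ^ n - X 2 ^ n) * (X 2 ^ n - X 0 ^ n)
        : MvPolynomial (Fin 3) k)
      ∉ (Ideal.span {X 0 * (X 1 ^ n - X 2 ^ n), X 1 * (X 2 ^ n - X 0 ^ n),
          X 2 * (X 0 ^ n - X 1 ^ n)} : Ideal (MvPolynomial (Fin 3) k)) ^ 2 := by
  intro hmem
  set M : Ideal (MvPolynomial (Fin 2) k) := Ideal.span {X 0 ^ (n + 1), X 1 ^ (2 * n + 1)}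
  set x := Ideal.Quotient.mk M (X 0)
  set t := Ideal.Quotient.mk M (X 1)
  have hx : x ^ (n + 1) = 0 := by
    rw [← map_pow, Ideal.Quotient.eq_zero_iff_mem]; exact Ideal.subset_span (by simp)
  have ht : t ^ (2 * n + 1) = 0 := by
    rw [← map_pow, Ideal.Quotient.eq_zero_iff_mem]; exact Ideal.subset_span (by simp)
  have hn₀ : n ≠ 0 := by omega
  rw [sq, Ideal.span_mul_span'] at hmem
  have hF := RingHom.eq_of_mem_eqLocusIdeal <| Ideal.span_le.mpr
    (Set.mul_subset_iff.mpr fun a ha b hb => fermat_gen_mul_mem_eqLocusIdeal hn₀ hx ht ha hb) hmem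
  have h2 : 2 * (x ^ n * t ^ (2 * n)) = 0 := by
    rw [← aeval_fermat_sub_aeval (k := k) hn₀ (pow_eq_zero_of_le (by omega) hx)]
    exact sub_eq_zero.mpr hF
  have hC : (C 2 : MvPolynomial (Fin 2) k) = 2 := map_ofNat C 2
  refine C_mul_X_pow_mul_X_pow_notMem_span (Ring.two_ne_zero hchar) n (2 * n) ?_
  rw [← Ideal.Quotient.eq_zero_iff_mem, hC, map_mul, map_mul, map_pow, map_pow, map_ofNat]
  exact h2

/-- **Harbourne–Seceleanu.** Let `k` be a field of characteristic `≠ 2` containing a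
primitive `n`-th root of unity, `n ≥ 3`. For the Fermat ideal
`I = ⟨x(yⁿ−zⁿ), y(zⁿ−xⁿ), z(xⁿ−yⁿ)⟩ ⊆ k[x,y,z]`, the polynomial
`Fₙ = (xⁿ−yⁿ)(yⁿ−zⁿ)(zⁿ−xⁿ)` does not lie in `I²`. -/
theorem fermat_polynomial_not_mem_sq {k : Type*} [Field k] (hchar : ringChar k ≠ 2)
    (n : ℕ) (hn : 3 ≤ n) (η : k) (hη : IsPrimitiveRoot η n) :
    ((X 0 ^ n - X 1 ^ n) * (X 1 ^ n - X 2 ^ n) * (X 2 ^ n - X 0 ^ n)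
        : MvPolynomial (Fin 3) k)
      ∉ (Ideal.span {X 0 * (X 1 ^ n - X 2 ^ n), X 1 * (X 2 ^ n - X 0 ^ n),
          X 2 * (X 0 ^ n - X 1 ^ n)} : Ideal (MvPolynomial (Fin 3) k)) ^ 2 :=
  fermat_polynomial_not_mem_sq_general hchar n hn
end

section
/- Let n ≥ 3 be an integer and let k be a field of characteristic different from 2 containing a primitive n-th root of unity η. Let Z ⊂ ℙ²(k) be the set consisting of the three coordinate points (1:0:0), (0:1:0), (0:0:1) together with the n² points Q_{a,b} = (1:ηᵃ:ηᵇ) for 1 ≤ a,b ≤ n. Then the polynomial Fₙ = (xⁿ−yⁿ)(yⁿ−zⁿ)(zⁿ−xⁿ) lies in the third symbolic power I(Z)^(3) = ⋂_{P∈Z} I(P)³. -/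
/-!
At a coordinate point `P` two coordinates vanish, so the factor `xᵢⁿ - xⱼⁿ` built from them lies in
`I(P)ⁿ ⊆ I(P)³`. At `(1 : ηᵃ : ηᵇ)` all coordinates are `n`-th roots of unity, so each of the three
factors lies in `I(P)`, and their product in `I(P)³`.
-/

open MvPolynomial

/-- The homogeneous vanishing ideal of the point of `ℙ²(k)` with representative `v`:
all polynomials vanishing on the line `k·v`. -/
def pointIdeal {k : Type*} [CommRing k] {σ : Type*} (v : σ → k) :
    Ideal (MvPolynomial σ k) where
  carrier := {f | ∀ t : k, MvPolynomial.eval (t • v) f = 0}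
  zero_mem' := fun t => map_zero _
  add_mem' := fun ha hb t => by rw [map_add, ha t, hb t, add_zero]
  smul_mem' := fun c x hx t => by rw [smul_eq_mul, map_mul, hx t, mul_zero]

/-- Representatives of the points of the Fermat configuration in `ℙ²(k)`:
the three coordinate points together with the `n²` points `(1 : ηᵃ : ηᵇ)`,
`1 ≤ a, b ≤ n`. -/
def fermatConfig {k : Type*} [Field k] (η : k) (n : ℕ) : Set (Fin 3 → k) :=
  {![1, 0, 0], ![0, 1, 0], ![0, 0, 1]} ∪
    {v | ∃ a, 1 ≤ a ∧ a ≤ n ∧ ∃ b, 1 ≤ b ∧ b ≤ n ∧ v = ![1, η ^ a, η ^ b]}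

section PointIdeal

variable {k σ : Type*} [CommRing k] {v : σ → k} {i j : σ}

theorem X_mem_pointIdeal (hi : v i = 0) : (X i : MvPolynomial σ k) ∈ pointIdeal v := fun t => by
  simp [hi]

theorem X_pow_sub_X_pow_mem_pow_pointIdeal (hi : v i = 0) (hj : v j = 0) {m n : ℕ}
    (hmn : m ≤ n) : (X i ^ n - X j ^ n : MvPolynomial σ k) ∈ pointIdeal v ^ m :=
  Ideal.pow_le_pow_right hmn <|
    sub_mem (Ideal.pow_mem_pow (X_mem_pointIdeal hi) n)
      (Ideal.pow_mem_pow (X_mem_pointIdeal hj) n)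

theorem X_pow_sub_X_pow_mem_pointIdeal {n : ℕ} (h : v i ^ n = v j ^ n) :
    (X i ^ n - X j ^ n : MvPolynomial σ k) ∈ pointIdeal v := fun t => by
  simp [mul_pow, h]

end PointIdeal

theorem fermat_polynomial_mem_symbolic_cube_general {k : Type*} [Field k]
    (n : ℕ) (hn : 3 ≤ n) (η : k) (hη : IsPrimitiveRoot η n) :
    ((X 0 ^ n - X 1 ^ n) * (X 1 ^ n - X 2 ^ n) * (X 2 ^ n - X 0 ^ n)
        : MvPolynomial (Fin 3) k)
      ∈ ⨅ v ∈ fermatConfig η n, (pointIdeal v) ^ 3 := by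
  simp only [Ideal.mem_iInf]
  rintro v ((rfl | rfl | rfl) | ⟨a, -, -, b, -, -, rfl⟩)
  · exact Ideal.mul_mem_right _ _ <| Ideal.mul_mem_left _ _ <|
      X_pow_sub_X_pow_mem_pow_pointIdeal (by simp) (by simp) hn
  · exact Ideal.mul_mem_left _ _ <| X_pow_sub_X_pow_mem_pow_pointIdeal (by simp) (by simp) hn
  · exact Ideal.mul_mem_right _ _ <| Ideal.mul_mem_right _ _ <|
      X_pow_sub_X_pow_mem_pow_pointIdeal (by simp) (by simp) hn
  · have hroot (c : ℕ) : (η ^ c) ^ n = 1 := by rw [pow_right_comm, hη.pow_eq_one, one_pow]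
    rw [pow_three']
    refine Ideal.mul_mem_mul (Ideal.mul_mem_mul ?_ ?_) ?_ <;>
      exact X_pow_sub_X_pow_mem_pointIdeal (by simp [hroot])

/-- For the Fermat configuration `Z ⊂ ℙ²(k)` (char `k ≠ 2`, `η` a primitive `n`-th root
of unity, `n ≥ 3`), the polynomial `Fₙ = (xⁿ−yⁿ)(yⁿ−zⁿ)(zⁿ−xⁿ)` lies in the third
symbolic power `I(Z)^(3) = ⋂_{P ∈ Z} I(P)³`. -/
theorem fermat_polynomial_mem_symbolic_cube {k : Type*} [Field k]
    (hchar : ringChar k ≠ 2) (n : ℕ) (hn : 3 ≤ n) (η : k) (hη : IsPrimitiveRoot η n) :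
    ((X 0 ^ n - X 1 ^ n) * (X 1 ^ n - X 2 ^ n) * (X 2 ^ n - X 0 ^ n)
        : MvPolynomial (Fin 3) k)
      ∈ ⨅ v ∈ fermatConfig η n, (pointIdeal v) ^ 3 :=
  fermat_polynomial_mem_symbolic_cube_general n hn η hη
end
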